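/- arXiv:1704.08186 — 4 statements merged into one kernel-verified Lean document; each statement's English description precedes it below -/
import Mathlib

section
/- Let 0 < α ≤ 1 and β > 0. If a function f : [0,∞) → ℝ is α-differentiable at a point t₀ > 0 in the sense of the local M-derivative (i.e., the limit defining 𝒟_M^{α,β} f(t₀) exists), then f is continuous at t₀. -/
open Filter Topology

/-- One-parameter Mittag-Leffler function `E_β(x) = ∑_{k=0}^∞ x^k / Γ(βk+1)`. -/
noncomputable def mittagLeffler (β x : ℝ) : ℝ :=
  ∑' k : ℕ, x ^ k / Real.Gamma (β * k + 1)

/-- `f` has local M-derivative `L` of order `α` with parameter `β` at `t`, i.e.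
`lim_{ε→0} (f (t · E_β (ε t^{-α})) - f t)/ε = L`. -/
def HasLocalMDerivAt (α β : ℝ) (f : ℝ → ℝ) (t L : ℝ) : Prop :=
  Tendsto (fun ε : ℝ => (f (t * mittagLeffler β (ε * t ^ (-α))) - f t) / ε)
    (𝓝[≠] (0 : ℝ)) (𝓝 L)

/-!
The M-derivative of `f` at `t₀` is the ordinary derivative at `0` of
`ε ↦ f (t₀ E_β(ε t₀^{-α}))`, so this composite is continuous at `0`. The inner map
`ε ↦ t₀ E_β(ε t₀^{-α})` has the nonzero strict derivative `t₀ · t₀^{-α} / Γ(β+1)` at `0`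
(`E_β` is a power series whose coefficients are bounded, because `Γ` is bounded below by a
positive constant on `(0, ∞)`), so by the inverse function theorem it maps the neighbourhoods
of `0` onto those of `t₀`, and continuity passes to `f`.
-/

namespace FormalMultilinearSeries

lemma one_le_radius_ofScalars_of_norm_le {𝕜 E : Type*} [NontriviallyNormedField 𝕜]
    [NormedRing E] [NormedAlgebra 𝕜 E] [NormOneClass E] {c : ℕ → 𝕜} {C : ℝ}
    (hc : ∀ n, ‖c n‖ ≤ C) : 1 ≤ (ofScalars E c).radius := by
  simpa using le_radius_of_bound (ofScalars E c) (r := 1) C fun n => by simpa using hc n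

lemma hasStrictDerivAt_ofScalarsSum_zero {𝕜 : Type*} [NontriviallyNormedField 𝕜]
    [CompleteSpace 𝕜] {c : ℕ → 𝕜} (hc : 0 < (ofScalars 𝕜 c).radius) :
    HasStrictDerivAt (ofScalarsSum c) (c 1) 0 := by
  have h := ((ofScalars 𝕜 c).hasFPowerSeriesOnBall hc).hasFPowerSeriesAt.hasStrictDerivAt
  simp only [ofScalars_apply_eq, pow_one, smul_eq_mul, mul_one] at h
  exact h

end FormalMultilinearSeries

open FormalMultilinearSeries

lemma exists_pos_forall_le_Gamma : ∃ m > 0, ∀ s > 0, m ≤ Real.Gamma s := by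
  obtain ⟨x, hx, hmin⟩ := Real.exists_isMinOn_Gamma_Ioi
  exact ⟨Real.Gamma x, Real.Gamma_pos_of_pos (by linarith [hx.1]), fun s hs => hmin hs⟩

lemma mittagLeffler_eq_ofScalarsSum (β : ℝ) :
    mittagLeffler β = ofScalarsSum fun n : ℕ => (Real.Gamma (β * n + 1))⁻¹ := by
  ext x
  rw [ofScalars_sum_eq]
  exact tsum_congr fun n => by rw [smul_eq_mul, div_eq_inv_mul]

lemma mittagLeffler_zero (β : ℝ) : mittagLeffler β 0 = 1 := by
  simp [mittagLeffler_eq_ofScalarsSum]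

lemma hasStrictDerivAt_mittagLeffler_zero {β : ℝ} (hβ : 0 ≤ β) :
    HasStrictDerivAt (mittagLeffler β) (Real.Gamma (β + 1))⁻¹ 0 := by
  obtain ⟨m, hm, hΓ⟩ := exists_pos_forall_le_Gamma
  have hcoeff (n : ℕ) : ‖(Real.Gamma (β * n + 1))⁻¹‖ ≤ m⁻¹ := by
    have hpos : 0 < β * n + 1 := by positivity
    rw [norm_inv, Real.norm_of_nonneg (Real.Gamma_pos_of_pos hpos).le]
    exact inv_anti₀ hm (hΓ _ hpos)
  have hradius := zero_lt_one.trans_le (one_le_radius_ofScalars_of_norm_le (E := ℝ) hcoeff)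
  have h := hasStrictDerivAt_ofScalarsSum_zero hradius
  simp only [Nat.cast_one, mul_one] at h
  rw [mittagLeffler_eq_ofScalarsSum]
  exact h

lemma map_nhds_mul_mittagLeffler {β t c : ℝ} (hβ : 0 ≤ β) (ht : t ≠ 0) (hc : c ≠ 0) :
    map (fun ε => t * mittagLeffler β (ε * c)) (𝓝 0) = 𝓝 t := by
  have hderiv : HasStrictDerivAt (fun ε => t * mittagLeffler β (ε * c))
      (t * ((Real.Gamma (β + 1))⁻¹ * c)) 0 := by
    have hE : HasStrictDerivAt (mittagLeffler β) (Real.Gamma (β + 1))⁻¹ (0 * c) := by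
      simpa using hasStrictDerivAt_mittagLeffler_zero hβ
    have hlin : HasStrictDerivAt (fun ε : ℝ => ε * c) c 0 := by
      simpa using (hasStrictDerivAt_id (0 : ℝ)).mul_const c
    exact (hE.comp (0 : ℝ) hlin).const_mul t
  have hΓ : Real.Gamma (β + 1) ≠ 0 := (Real.Gamma_pos_of_pos (by linarith)).ne'
  simpa [mittagLeffler_zero] using hderiv.map_nhds_eq (by positivity)

lemma HasLocalMDerivAt.hasDerivAt_comp {α β t L : ℝ} {f : ℝ → ℝ}
    (hf : HasLocalMDerivAt α β f t L) :
    HasDerivAt (fun ε => f (t * mittagLeffler β (ε * t ^ (-α)))) L 0 := by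
  unfold HasLocalMDerivAt at hf
  rw [hasDerivAt_iff_tendsto_slope_zero]
  simpa [mittagLeffler_zero, div_eq_inv_mul] using hf

theorem stmt0_general (α β t₀ : ℝ) (hβ : 0 < β) (ht₀ : 0 < t₀)
    (f : ℝ → ℝ) (hf : ∃ L, HasLocalMDerivAt α β f t₀ L) :
    ContinuousAt f t₀ := by
  obtain ⟨L, hL⟩ := hf
  have hmap := map_nhds_mul_mittagLeffler hβ.le ht₀.ne' (Real.rpow_pos_of_pos ht₀ (-α)).ne'
  have hcomp := hL.hasDerivAt_comp.continuousAt
  rw [ContinuousAt, ← hmap, tendsto_map'_iff]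
  simpa [ContinuousAt, Function.comp_def, mittagLeffler_zero] using hcomp

/-- if `f` is α-differentiable at `t₀ > 0` in the sense of the local
M-derivative, then `f` is continuous at `t₀`. -/
theorem stmt0 (α β t₀ : ℝ) (hα0 : 0 < α) (hα1 : α ≤ 1) (hβ : 0 < β) (ht₀ : 0 < t₀)
    (f : ℝ → ℝ) (hf : ∃ L, HasLocalMDerivAt α β f t₀ L) :
    ContinuousAt f t₀ :=
  stmt0_general α β t₀ hβ ht₀ f hf
end

section
/- (Product rule) Let 0 < α ≤ 1, β > 0, t > 0, and let f, g be α-differentiable at t in the sense of the local M-derivative. Then the product f·g is α-differentiable at t and 𝒟_M^{α,β}(f·g)(t) = f(t)·𝒟_M^{α,β} g(t) + g(t)·𝒟_M^{α,β} f(t). -/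
open Filter Topology

/-- Product rule. -/
theorem stmt2 (α β t : ℝ) (hα0 : 0 < α) (hα1 : α ≤ 1) (hβ : 0 < β) (ht : 0 < t)
    (f g : ℝ → ℝ) (Lf Lg : ℝ)
    (hf : HasLocalMDerivAt α β f t Lf) (hg : HasLocalMDerivAt α β g t Lg) :
    HasLocalMDerivAt α β (fun x => f x * g x) t (f t * Lg + g t * Lf) := by
  unfold HasLocalMDerivAt at *
  set φ : ℝ → ℝ := fun ε => t * mittagLeffler β (ε * t ^ (-α)) with hφ
  have hε : Tendsto (fun ε : ℝ => ε) (𝓝[≠] (0:ℝ)) (𝓝 0) :=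
    tendsto_id.mono_left nhdsWithin_le_nhds
  have hfc : Tendsto (fun ε : ℝ => f (φ ε)) (𝓝[≠] (0:ℝ)) (𝓝 (f t)) := by
    have h1 : Tendsto (fun ε : ℝ => (f (φ ε) - f t) / ε * ε) (𝓝[≠] (0:ℝ)) (𝓝 (Lf * 0)) :=
      hf.mul hε
    rw [mul_zero] at h1
    have h2 : Tendsto (fun ε : ℝ => f (φ ε) - f t) (𝓝[≠] (0:ℝ)) (𝓝 0) := by
      refine h1.congr' ?_
      filter_upwards [self_mem_nhdsWithin] with ε hεne
      exact div_mul_cancel₀ _ hεne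
    have := h2.add_const (f t)
    simpa using this
  have key : Tendsto (fun ε : ℝ =>
      f (φ ε) * ((g (φ ε) - g t) / ε) + g t * ((f (φ ε) - f t) / ε))
      (𝓝[≠] (0:ℝ)) (𝓝 (f t * Lg + g t * Lf)) :=
    (hfc.mul hg).add (tendsto_const_nhds.mul hf)
  refine key.congr' ?_
  filter_upwards [self_mem_nhdsWithin] with ε hεne
  field_simp
  ring
end

section
/- (Quotient rule) Let 0 < α ≤ 1, β > 0, t > 0, and let f, g be α-differentiable at t in the sense of the local M-derivative, with g(t) ≠ 0 and g continuous at t. Then f/g is α-differentiable at t and 𝒟_M^{α,β}(f/g)(t) = [g(t)·𝒟_M^{α,β} f(t) − f(t)·𝒟_M^{α,β} g(t)] / [g(t)]². -/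
/-!
The local M-derivative is an ordinary limit of difference quotients along the curve
`u ε = t · E_β(ε t^{-α})`, which passes through `t` at `ε = 0`. Writing
`f (u ε) = f t + ε · (f (u ε) - f t) / ε` shows that an M-differentiable function is continuous
along `u`, and with this the classical proofs of the product and reciprocal rules go through
unchanged; the quotient rule is their combination for `f · g⁻¹`.
-/

open Filter Topology

namespace HasLocalMDerivAt

variable {α β t Lf Lg : ℝ} {f g : ℝ → ℝ}

theorem tendsto_apply (hf : HasLocalMDerivAt α β f t Lf) :
    Tendsto (fun ε => f (t * mittagLeffler β (ε * t ^ (-α)))) (𝓝[≠] 0) (𝓝 (f t)) := by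
  have hε : Tendsto (fun ε : ℝ => ε) (𝓝[≠] 0) (𝓝 0) :=
    tendsto_nhdsWithin_of_tendsto_nhds tendsto_id
  have h := (tendsto_const_nhds (x := f t)).add (hε.mul hf)
  rw [zero_mul, add_zero] at h
  refine h.congr' ?_
  filter_upwards [self_mem_nhdsWithin] with ε (hε : ε ≠ 0)
  field_simp
  ring

theorem mul (hf : HasLocalMDerivAt α β f t Lf) (hg : HasLocalMDerivAt α β g t Lg) :
    HasLocalMDerivAt α β (fun x => f x * g x) t (Lf * g t + f t * Lg) :=
  ((Tendsto.mul hf hg.tendsto_apply).add (tendsto_const_nhds.mul hg)).congr fun ε => by ring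

theorem inv (hg : HasLocalMDerivAt α β g t Lg) (hgt : g t ≠ 0) :
    HasLocalMDerivAt α β (fun x => (g x)⁻¹) t (-Lg / g t ^ 2) := by
  have hgu := hg.tendsto_apply
  have h := (Tendsto.neg hg).div (hgu.mul tendsto_const_nhds) (mul_ne_zero hgt hgt)
  rw [HasLocalMDerivAt, sq]
  refine h.congr' ?_
  filter_upwards [hgu.eventually_ne hgt] with ε hε
  simp only [Pi.div_apply]
  field_simp
  ring

end HasLocalMDerivAt

theorem stmt3_general (α β t : ℝ)
    (f g : ℝ → ℝ) (Lf Lg : ℝ)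
    (hf : HasLocalMDerivAt α β f t Lf) (hg : HasLocalMDerivAt α β g t Lg)
    (hgt : g t ≠ 0) :
    HasLocalMDerivAt α β (fun x => f x / g x) t
      ((g t * Lf - f t * Lg) / (g t) ^ 2) := by
  have h := hf.mul (hg.inv hgt)
  simp only [← div_eq_mul_inv] at h
  convert h using 1
  field_simp
  ring

/-- Quotient rule. -/
theorem stmt3 (α β t : ℝ) (hα0 : 0 < α) (hα1 : α ≤ 1) (hβ : 0 < β) (ht : 0 < t)
    (f g : ℝ → ℝ) (Lf Lg : ℝ)
    (hf : HasLocalMDerivAt α β f t Lf) (hg : HasLocalMDerivAt α β g t Lg)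
    (hgt : g t ≠ 0) (hgc : ContinuousAt g t) :
    HasLocalMDerivAt α β (fun x => f x / g x) t
      ((g t * Lf - f t * Lg) / (g t) ^ 2) :=
  stmt3_general α β t f g Lf Lg hf hg hgt
end

section
/- (Chain rule) Let 0 < α ≤ 1, β > 0 and t > 0. If g is α-differentiable at t in the sense of the local M-derivative, g is continuous at t, and f is differentiable (in the classical sense) at g(t), then the composition f ∘ g is α-differentiable at t and 𝒟_M^{α,β}(f ∘ g)(t) = f'(g(t)) · 𝒟_M^{α,β} g(t). -/
/-!
Carathéodory's form of differentiability: `f y' - f y = dslope f y y' * (y' - y)` with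
`dslope f y` continuous at `y`, so along `y' = g (t E_β(ε t^{-α}))` the quotient for `f ∘ g`
factors as a slope tending to `f' (g t)` times the quotient for `g`. That `y' → g t` already
follows from the existence of the M-derivative of `g`, since the numerator is the quotient times `ε`.
-/

open Filter Topology

theorem HasDerivAt.tendsto_sub_div_comp {𝕜 ι : Type*} [NontriviallyNormedField 𝕜]
    {f : 𝕜 → 𝕜} {f' y L : 𝕜} {l : Filter ι} {v d : ι → 𝕜} (hf : HasDerivAt f f' y)
    (hv : Tendsto v l (𝓝 y)) (hvd : Tendsto (fun i => (v i - y) / d i) l (𝓝 L)) :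
    Tendsto (fun i => (f (v i) - f y) / d i) l (𝓝 (f' * L)) := by
  have hslope : Tendsto (fun i => dslope f y (v i)) l (𝓝 f') := by
    rw [← hf.deriv, ← dslope_same f y]
    exact (continuousAt_dslope_same.mpr hf.differentiableAt).tendsto.comp hv
  refine (hslope.mul hvd).congr fun i => ?_
  rw [← sub_smul_dslope f y (v i), smul_eq_mul, mul_div_right_comm, mul_comm]

theorem tendsto_of_tendsto_sub_div_nhdsNE {𝕜 : Type*} [NontriviallyNormedField 𝕜]
    {w : 𝕜 → 𝕜} {c L : 𝕜} (hw : Tendsto (fun ε => (w ε - c) / ε) (𝓝[≠] 0) (𝓝 L)) :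
    Tendsto w (𝓝[≠] 0) (𝓝 c) := by
  have hsub : Tendsto (fun ε => w ε - c) (𝓝[≠] 0) (𝓝 0) := by
    have hprod := hw.mul (tendsto_id.mono_left nhdsWithin_le_nhds)
    rw [mul_zero] at hprod
    refine hprod.congr' ?_
    filter_upwards [self_mem_nhdsWithin] with ε hε
    exact div_mul_cancel₀ _ hε
  simpa using hsub.add_const c

theorem stmt6_general (α β t : ℝ)
    (f g : ℝ → ℝ) (Lg f' : ℝ)
    (hg : HasLocalMDerivAt α β g t Lg)
    (hf : HasDerivAt f f' (g t)) :
    HasLocalMDerivAt α β (f ∘ g) t (f' * Lg) :=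
  hf.tendsto_sub_div_comp (tendsto_of_tendsto_sub_div_nhdsNE hg) hg

/-- Chain rule. -/
theorem stmt6 (α β t : ℝ) (hα0 : 0 < α) (hα1 : α ≤ 1) (hβ : 0 < β) (ht : 0 < t)
    (f g : ℝ → ℝ) (Lg f' : ℝ)
    (hg : HasLocalMDerivAt α β g t Lg) (hgc : ContinuousAt g t)
    (hf : HasDerivAt f f' (g t)) :
    HasLocalMDerivAt α β (f ∘ g) t (f' * Lg) :=
  stmt6_general α β t f g Lg f' hg hf
end
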